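/- Let G be a topological group admitting a compact open subgroup K such that the set of left cosets of K in G is countable. Let k be an uncountable algebraically closed field and V an irreducible smooth representation of G over k. Then V has a central character: for every element z of the center of G there exists a scalar c in k such that z·v = c v for all v in V. -/

import Mathlib

section Defs

variable {k : Type*} [Field k] {G : Type*} [Group G] [TopologicalSpace G]
variable {V : Type*} [AddCommGroup V] [Module k V]

/-- A representation of a topological group is smooth if the stabilizer of every
vector is an open subset. -/
def IsSmoothRep (ρ : Representation k G V) : Prop :=
  ∀ v : V, IsOpen {g : G | ρ g v = v}

/-- The subspace of vectors fixed by every element of a subset `S` of `G`. -/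
def fixedBy (ρ : Representation k G V) (S : Set G) : Submodule k V where
  carrier := {v : V | ∀ g ∈ S, ρ g v = v}
  add_mem' := by intro a b ha hb g hg; simp [map_add, ha g hg, hb g hg]
  zero_mem' := by intro g hg; simp
  smul_mem' := by intro c a ha g hg; simp [ha g hg]

/-- A subspace is `G`-stable if it is preserved by the action. -/
def IsStableRep (ρ : Representation k G V) (W : Submodule k V) : Prop :=
  ∀ g : G, ∀ v ∈ W, ρ g v ∈ W

/-- A representation is irreducible if it is nonzero and its only `G`-stable
subspaces are `⊥` and `⊤`. -/
def IsIrreducibleRep (ρ : Representation k G V) : Prop :=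
  (∃ v : V, v ≠ 0) ∧ ∀ W : Submodule k V, IsStableRep ρ W → W = ⊥ ∨ W = ⊤

/-- A representation is admissible if it is smooth and its fixed vectors under every
open subgroup form a finite-dimensional space. -/
def IsAdmissibleRep (ρ : Representation k G V) : Prop :=
  IsSmoothRep ρ ∧
    ∀ J : Subgroup G, IsOpen (J : Set G) → FiniteDimensional k ↥(fixedBy ρ (J : Set G))

/-- A (profinite) topological group is pro-`p` if every open normal subgroup has
index a power of `p`. -/
def IsProP (p : ℕ) (G : Type*) [Group G] [TopologicalSpace G] : Prop :=
  ∀ N : Subgroup G, N.Normal → IsOpen (N : Set G) → ∃ n : ℕ, N.index = p ^ n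

end Defs

/-! Dixmier's argument. The stabilizer of a vector is open, so it meets the compact group `K` in
a subgroup of finite index; hence every orbit `G • v` is countable, and by irreducibility it spans
`V`, so `dim V ≤ ℵ₀`. A central element acts by an endomorphism `T` commuting with `G`. If every
`T - c` were invertible, the vectors `(T - c)⁻¹ v`, `c ∈ k`, would be linearly independent, which is
impossible for uncountable `k`. So some `T - c` is not invertible, and by Schur's lemma it is `0`.
-/

open Polynomial Cardinal

section SpectrumEmpty

variable {k A : Type*} [Field k] [IsAlgClosed k] [Ring A] [Algebra k A] {a : A}

theorem isUnit_aeval_of_spectrum_eq_empty (ha : spectrum k a = ∅) {p : k[X]} (hp : p ≠ 0) :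
    IsUnit (aeval a p) := by
  rcases le_or_gt p.degree 0 with hdeg | hdeg
  · rw [eq_C_of_degree_le_zero hdeg, aeval_C]
    refine (IsUnit.mk0 _ fun h0 => hp ?_).map (algebraMap k A)
    rw [eq_C_of_degree_le_zero hdeg, h0, C_0]
  · have h := spectrum.map_polynomial_aeval_of_degree_pos a p hdeg
    rw [ha, Set.image_empty] at h
    exact (spectrum.zero_notMem_iff k).mp (h ▸ Set.notMem_empty 0)

/-- Multiplying a relation `∑ g c • (a - c)⁻¹ • v = 0` by `∏ (a - c)` gives `p(a) • v = 0` for the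
nonzero polynomial `p = ∑ g c • ∏_{c' ≠ c} (X - c')`, and `p(a)` is a unit. -/
theorem linearIndependent_inverse_sub_smul_of_spectrum_eq_empty {M : Type*} [AddCommGroup M]
    [Module A M] [Module k M] [IsScalarTower k A M] (ha : spectrum k a = ∅) {v : M}
    (hv : v ≠ 0) : LinearIndependent k fun c => Ring.inverse (a - algebraMap k A c) • v := by
  classical
  have hunit (c : k) : IsUnit (a - algebraMap k A c) :=
    IsUnit.sub_iff.mp (spectrum.notMem_iff.mp (ha ▸ Set.notMem_empty c))
  have hnodal (s : Finset k) {c : k} (hc : c ∈ s) :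
      aeval a (Lagrange.nodal s id) * Ring.inverse (a - algebraMap k A c) =
        aeval a (Lagrange.nodal (s.erase c) id) := by
    rw [Lagrange.nodal_eq_mul_nodal_erase hc, mul_comm, map_mul, mul_assoc]
    simp [Ring.mul_inverse_cancel _ (hunit c)]
  rw [linearIndependent_iff']
  intro s g hsum i hi
  by_contra hgi
  set p : k[X] := ∑ c ∈ s, C (g c) * Lagrange.nodal (s.erase c) id
  have hp : p ≠ 0 := by
    have hpi : eval i p = g i * eval i (Lagrange.nodal (s.erase i) id) := by
      rw [eval_finsetSum, Finset.sum_eq_single_of_mem i hi, eval_mul, eval_C]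
      intro c _ hci
      exact (eval_mul ..).trans <| mul_eq_zero_of_right _
        (Lagrange.eval_nodal_at_node (v := id) (Finset.mem_erase.mpr ⟨hci.symm, hi⟩))
    have hnode : ∀ c ∈ s.erase i, i ≠ id c := fun c hc => (Finset.ne_of_mem_erase hc).symm
    refine fun h0 => mul_ne_zero hgi (Lagrange.eval_nodal_not_at_node hnode) ?_
    rw [← hpi, h0, eval_zero]
  have hpv : aeval a p • v = 0 := by
    calc aeval a p • v
        = aeval a (Lagrange.nodal s id) •
            ∑ c ∈ s, g c • Ring.inverse (a - algebraMap k A c) • v := by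
          simp only [p, map_sum, Finset.sum_smul, Finset.smul_sum]
          refine Finset.sum_congr rfl fun c hc => ?_
          rw [map_mul, aeval_C, mul_smul, algebraMap_smul, smul_comm _ (g c), ← mul_smul,
            hnodal s hc]
      _ = 0 := by rw [hsum, smul_zero]
  exact hv <| (isUnit_aeval_of_spectrum_eq_empty ha hp).smul_left_cancel.mp <|
    hpv.trans (smul_zero _).symm

end SpectrumEmpty

theorem Module.End.spectrum_nonempty_of_rank_le_aleph0 {k V : Type*} [Field k] [IsAlgClosed k]
    [Uncountable k] [AddCommGroup V] [Module k V] [Nontrivial V] (hV : Module.rank k V ≤ ℵ₀)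
    (T : Module.End k V) : (spectrum k T).Nonempty := by
  by_contra hT
  obtain ⟨v, hv⟩ := exists_ne (0 : V)
  have hli := linearIndependent_inverse_sub_smul_of_spectrum_eq_empty
    (Set.not_nonempty_iff_eq_empty.mp hT) hv
  have hk : lift #k ≤ ℵ₀ := hli.cardinal_lift_le_rank.trans (by simpa using hV)
  exact not_countable (α := k) (mk_le_aleph0_iff.mp (lift_le_aleph0.mp hk))

namespace IsIrreducibleRep

variable {k G V : Type*} [Field k] [Group G] [AddCommGroup V] [Module k V]
  {ρ : Representation k G V}

theorem span_range_apply_eq_top (hirr : IsIrreducibleRep ρ) {v : V} (hv : v ≠ 0) :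
    Submodule.span k (Set.range fun g => ρ g v) = ⊤ := by
  refine (hirr.2 _ fun g w hw => ?_).resolve_left fun h => hv ?_
  · have hw' : ρ g w ∈ Submodule.span k ((ρ g) '' Set.range fun g => ρ g v) :=
      Submodule.map_span (ρ g) _ ▸ Submodule.mem_map_of_mem hw
    refine Submodule.span_mono ?_ hw'
    rintro _ ⟨_, ⟨h, rfl⟩, rfl⟩
    exact ⟨g * h, by simp only [map_mul, Module.End.mul_apply]⟩
  · have hmem : v ∈ Submodule.span k (Set.range fun g => ρ g v) :=
      Submodule.subset_span ⟨1, by simp only [map_one, Module.End.one_apply]⟩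
    rwa [h, Submodule.mem_bot] at hmem

theorem isUnit_of_commute (hirr : IsIrreducibleRep ρ) {T : Module.End k V}
    (hT : ∀ g, Commute (ρ g) T) (hT0 : T ≠ 0) : IsUnit T := by
  have hker : LinearMap.ker T = ⊥ := by
    refine (hirr.2 _ fun g w hw => ?_).resolve_right fun h => hT0 ?_
    · rw [LinearMap.mem_ker] at hw ⊢
      rw [← Module.End.mul_apply, ← (hT g).eq, Module.End.mul_apply, hw, map_zero]
    · exact LinearMap.ker_eq_top.mp h
  have hrange : LinearMap.range T = ⊤ := by
    refine (hirr.2 _ fun g w hw => ?_).resolve_left fun h => hT0 (LinearMap.range_eq_bot.mp h)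
    obtain ⟨u, rfl⟩ := hw
    exact ⟨ρ g u, by rw [← Module.End.mul_apply, ← (hT g).eq, Module.End.mul_apply]⟩
  exact (Module.End.isUnit_iff T).mpr
    ⟨LinearMap.ker_eq_bot.mp hker, LinearMap.range_eq_top.mp hrange⟩

theorem exists_eq_algebraMap_of_commute [IsAlgClosed k] [Uncountable k]
    (hirr : IsIrreducibleRep ρ) (hV : Module.rank k V ≤ ℵ₀) {T : Module.End k V}
    (hT : ∀ g, Commute (ρ g) T) : ∃ c : k, T = algebraMap k _ c := by
  obtain ⟨v, hv⟩ := hirr.1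
  have : Nontrivial V := ⟨⟨v, 0, hv⟩⟩
  obtain ⟨c, hc⟩ := T.spectrum_nonempty_of_rank_le_aleph0 hV
  refine ⟨c, (sub_eq_zero.mp ?_).symm⟩
  by_contra h0
  exact spectrum.mem_iff.mp hc (hirr.isUnit_of_commute
    (fun g => (Algebra.commute_algebraMap_right c (ρ g)).sub_right (hT g)) h0)

end IsIrreducibleRep

theorem Subgroup.countable_quotient_of_isOpen {G : Type*} [Group G] [TopologicalSpace G]
    [IsTopologicalGroup G] {K H : Subgroup G} (hK : IsCompact (K : Set G)) [Countable (G ⧸ K)]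
    (hH : IsOpen (H : Set G)) : Countable (G ⧸ H) := by
  have : CompactSpace K := isCompact_iff_compactSpace.mp hK
  have : Finite (K ⧸ (H ⊓ K).subgroupOf K) := by
    rw [Subgroup.inf_subgroupOf_right]
    exact Subgroup.quotient_finite_of_isOpen _ (K.subgroupOf_isOpen H hH)
  have : Countable (G ⧸ H ⊓ K) := .of_equiv _ (Subgroup.quotientEquivProdOfLE inf_le_right).symm
  exact Function.Surjective.countable (f := Subgroup.quotientMapOfLE (inf_le_left : H ⊓ K ≤ H))
    fun q => QuotientGroup.induction_on q fun g => ⟨g, rfl⟩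

section Smooth

variable {k G V : Type*} [Field k] [Group G] [AddCommGroup V] [Module k V]

def Representation.stabilizer (ρ : Representation k G V) (v : V) : Subgroup G where
  carrier := {g | ρ g v = v}
  mul_mem' {a b} ha hb := by simp_all [Module.End.mul_apply]
  one_mem' := by simp
  inv_mem' {a} (ha : ρ a v = v) := (congrArg (ρ a⁻¹) ha).symm.trans (ρ.inv_self_apply a v)

@[simp]
theorem Representation.mem_stabilizer {ρ : Representation k G V} {v : V} {g : G} :
    g ∈ ρ.stabilizer v ↔ ρ g v = v :=
  Iff.rfl

theorem IsSmoothRep.countable_range_apply [TopologicalSpace G] [IsTopologicalGroup G]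
    {ρ : Representation k G V} (hsm : IsSmoothRep ρ) {K : Subgroup G}
    (hK : IsCompact (K : Set G)) [Countable (G ⧸ K)] (v : V) :
    (Set.range fun g => ρ g v).Countable := by
  have := Subgroup.countable_quotient_of_isOpen (H := ρ.stabilizer v) hK (hsm v)
  refine (Set.countable_range fun q : G ⧸ ρ.stabilizer v => ρ q.out v).mono ?_
  rintro _ ⟨g, rfl⟩
  obtain ⟨h, hh⟩ := QuotientGroup.mk_out_eq_mul (ρ.stabilizer v) g
  exact ⟨g, by simp only [hh, map_mul, Module.End.mul_apply, Representation.mem_stabilizer.mp h.2]⟩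

end Smooth

theorem statement8_general {G : Type*} [Group G] [TopologicalSpace G] [IsTopologicalGroup G]
    (K : Subgroup G) (hKc : IsCompact (K : Set G))
    (hcount : Countable (G ⧸ K))
    {k : Type*} [Field k] [IsAlgClosed k] [Uncountable k]
    {V : Type*} [AddCommGroup V] [Module k V]
    (ρ : Representation k G V) (hsm : IsSmoothRep ρ) (hirr : IsIrreducibleRep ρ) :
    ∀ z ∈ Subgroup.center G, ∃ c : k, ∀ v : V, ρ z v = c • v := by
  intro z hz
  obtain ⟨v, hv⟩ := hirr.1
  have hrank : Module.rank k V ≤ ℵ₀ := by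
    rw [← rank_top, ← hirr.span_range_apply_eq_top hv]
    exact (rank_span_le _).trans (hsm.countable_range_apply hKc v).le_aleph0
  obtain ⟨c, hc⟩ := hirr.exists_eq_algebraMap_of_commute hrank
    fun g => (show Commute g z from Subgroup.mem_center_iff.mp hz g).map ρ
  exact ⟨c, fun w => by rw [hc, Module.algebraMap_end_apply]⟩

/-- if `G` has a compact open subgroup with countably many left cosets and
`k` is uncountable algebraically closed, then every irreducible smooth representation of
`G` over `k` has a central character. -/
theorem statement8 {G : Type*} [Group G] [TopologicalSpace G] [IsTopologicalGroup G]
    (K : Subgroup G) (hKc : IsCompact (K : Set G)) (hKo : IsOpen (K : Set G))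
    (hcount : Countable (G ⧸ K))
    {k : Type*} [Field k] [IsAlgClosed k] [Uncountable k]
    {V : Type*} [AddCommGroup V] [Module k V]
    (ρ : Representation k G V) (hsm : IsSmoothRep ρ) (hirr : IsIrreducibleRep ρ) :
    ∀ z ∈ Subgroup.center G, ∃ c : k, ∀ v : V, ρ z v = c • v :=
  statement8_general K hKc hcount ρ hsm hirr
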